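/- arXiv:2109.13865 — 3 statements merged into one kernel-verified Lean document; each statement's English description precedes it below -/
import Mathlib

section
/- Let T > 0, let φ_p, φ_r : ℝ → ℝ be continuous T-periodic functions, and let d_p, d_r ∈ ℂ with |d_p| = |d_r| = 1. Define x(t) = d_p·e^{iφ_p(t)} + d_r·e^{iφ_r(t)} and y(t) = d_p·e^{iφ_p(t)} − d_r·e^{iφ_r(t)}, and let x̂(k) = (1/T)∫₀ᵀ x(t)e^{−2πikt/T}dt and ŷ(k) = (1/T)∫₀ᵀ y(t)e^{−2πikt/T}dt denote their Fourier coefficients. Then for every integer l ≠ 0, the series ∑_{k∈ℤ} ( conj(x̂(k))·x̂(k+l) + conj(ŷ(k))·ŷ(k+l) ) converges absolutely and its sum equals 0; that is, the bi-infinite sequences of Fourier coefficients of x and y form a Golay complementary pair. -/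
open Complex Real MeasureTheory

open AddCircle

private lemma fourierCoeff_mul_shift {T : ℝ} [hT : Fact (0 < T)]
    (f : AddCircle T → ℂ) (k l : ℤ) :
    fourierCoeff (fun t => fourier (-l) t * f t) k = fourierCoeff f (k + l) := by
  simp only [fourierCoeff, smul_eq_mul]
  congr 1
  funext t
  rw [neg_add, fourier_add]
  ring

private lemma integral_fourier_zero {T : ℝ} [hT : Fact (0 < T)]
    (l : ℤ) (hl : l ≠ 0) :
    (∫ t : AddCircle T, fourier (-l) t ∂haarAddCircle) = 0 := by
  have h1 : (∫ t : AddCircle T, fourier (-l) t ∂haarAddCircle)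
      = fourierCoeff (fun _ : AddCircle T => (1:ℂ)) l := by
    simp [fourierCoeff]
  rw [h1, fourierCoeff_eq_intervalIntegral _ l 0, zero_add]
  have hc : (2 * (π:ℂ) * Complex.I * (-l) / T) ≠ 0 := by
    apply div_ne_zero
    · simp [Real.pi_ne_zero, Complex.I_ne_zero, hl]
    · exact_mod_cast hT.out.ne'
  have h2 : (∫ x in (0:ℝ)..T, (fourier (-l) (x : AddCircle T) : ℂ) • (1:ℂ))
      = ∫ x in (0:ℝ)..T, Complex.exp ((2 * (π:ℂ) * Complex.I * (-l) / T) * x) := by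
    apply intervalIntegral.integral_congr
    intro t ht
    show (fourier (-l)) (t : AddCircle T) • (1:ℂ) = _
    rw [smul_eq_mul, mul_one, fourier_coe_apply]
    congr 1
    push_cast
    ring
  rw [h2, integral_exp_mul_complex hc]
  have hT' : (T:ℂ) ≠ 0 := by exact_mod_cast hT.out.ne'
  have h3 : (2 * (π:ℂ) * Complex.I * (-l) / T) * T = (-l : ℤ) * (2 * π * Complex.I) := by
    field_simp
    simp
  rw [h3, Complex.exp_int_mul_two_pi_mul_I, Complex.ofReal_zero, mul_zero, Complex.exp_zero,
    sub_self, zero_div, smul_zero]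

private lemma golay_key {T : ℝ} [hT : Fact (0 < T)]
    (F : C(AddCircle T, ℂ)) (hF : ∀ t, (starRingEnd ℂ) (F t) * F t = 1)
    (l : ℤ) (hl : l ≠ 0) :
    Summable (fun k : ℤ => ‖fourierCoeff (⇑F) k‖ * ‖fourierCoeff (⇑F) (k + l)‖) ∧
    ∑' k : ℤ, (starRingEnd ℂ) (fourierCoeff (⇑F) k) * fourierCoeff (⇑F) (k + l) = 0 := by
  set G : C(AddCircle T, ℂ) := (fourier (-l)) * F with hG
  have hGcoeff : ∀ k : ℤ, fourierCoeff (⇑G) k = fourierCoeff (⇑F) (k + l) := fun k =>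
    fourierCoeff_mul_shift (⇑F) k l
  set Fl := ContinuousMap.toLp (E := ℂ) 2 haarAddCircle ℂ F with hFl
  set Gl := ContinuousMap.toLp (E := ℂ) 2 haarAddCircle ℂ G with hGl
  have hrF : ∀ k, fourierBasis.repr Fl k = fourierCoeff (⇑F) k := fun k => by
    rw [fourierBasis_repr]; exact fourierCoeff_toLp F k
  have hrG : ∀ k, fourierBasis.repr Gl k = fourierCoeff (⇑F) (k + l) := fun k => by
    rw [fourierBasis_repr]; rw [fourierCoeff_toLp G k]; exact hGcoeff k
  constructor
  · have hs := lp.summable_mul (p := 2) (q := 2)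
      (by simpa using Real.HolderConjugate.two_two)
      (fourierBasis.repr Fl) (fourierBasis.repr Gl)
    simp only [hrF, hrG] at hs
    exact hs
  · have hinner : (inner ℂ Fl Gl : ℂ)
        = ∑' k : ℤ, (starRingEnd ℂ) (fourierCoeff (⇑F) k) * fourierCoeff (⇑F) (k + l) := by
      rw [← fourierBasis.repr.inner_map_map Fl Gl, lp.inner_eq_tsum]
      congr 1
      funext k
      rw [RCLike.inner_apply', hrF, hrG]
    rw [← hinner]
    have hinteg : (inner ℂ Fl Gl : ℂ) = ∫ t : AddCircle T, fourier (-l) t ∂haarAddCircle := by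
      rw [MeasureTheory.L2.inner_def]
      have hFae := ContinuousMap.coeFn_toLp (p := 2) (μ := haarAddCircle) (𝕜 := ℂ) F
      have hGae := ContinuousMap.coeFn_toLp (p := 2) (μ := haarAddCircle) (𝕜 := ℂ) G
      calc ∫ t : AddCircle T, (inner ℂ (Fl t) (Gl t) : ℂ) ∂haarAddCircle
          = ∫ t : AddCircle T, (starRingEnd ℂ) (F t) * (G t) ∂haarAddCircle := by
            apply integral_congr_ae
            filter_upwards [hFae, hGae] with t h1 h2
            rw [RCLike.inner_apply', h1, h2]
        _ = ∫ t : AddCircle T, fourier (-l) t ∂haarAddCircle := by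
            apply integral_congr_ae
            apply Filter.Eventually.of_forall
            intro t
            show (starRingEnd ℂ) (F t) * (fourier (-l) t * F t) = _
            rw [mul_comm ((fourier (-l)) t) (F t), ← mul_assoc, hF t, one_mul]
    rw [hinteg, integral_fourier_zero l hl]

/-- The Fourier coefficients of the sum `x` and difference `y` of two
unimodularly-weighted constant-envelope chirps form a Golay complementary pair: for every
nonzero integer lag `l`, the cross-correlation series converges absolutely and sums to `0`. -/

theorem stmt_0
    (T : ℝ) (hT : 0 < T)
    (φp φr : ℝ → ℝ) (hφp : Continuous φp) (hφr : Continuous φr)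
    (hφpT : ∀ t, φp (t + T) = φp t) (hφrT : ∀ t, φr (t + T) = φr t)
    (dp dr : ℂ) (hdp : ‖dp‖ = 1) (hdr : ‖dr‖ = 1)
    (x y : ℝ → ℂ)
    (hx : ∀ t : ℝ, x t = dp * Complex.exp (Complex.I * (φp t : ℂ))
        + dr * Complex.exp (Complex.I * (φr t : ℂ)))
    (hy : ∀ t : ℝ, y t = dp * Complex.exp (Complex.I * (φp t : ℂ))
        - dr * Complex.exp (Complex.I * (φr t : ℂ)))
    (xhat yhat : ℤ → ℂ)
    (hxhat : ∀ k : ℤ, xhat k = (1 / (T : ℂ)) *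
        ∫ t in (0:ℝ)..T, x t *
          Complex.exp (-2 * (Real.pi : ℂ) * Complex.I * (k : ℂ) * (t : ℂ) / (T : ℂ)))
    (hyhat : ∀ k : ℤ, yhat k = (1 / (T : ℂ)) *
        ∫ t in (0:ℝ)..T, y t *
          Complex.exp (-2 * (Real.pi : ℂ) * Complex.I * (k : ℂ) * (t : ℂ) / (T : ℂ)))
    (l : ℤ) (hl : l ≠ 0) :
    Summable (fun k : ℤ =>
      ‖(starRingEnd ℂ) (xhat k) * xhat (k + l) + (starRingEnd ℂ) (yhat k) * yhat (k + l)‖) ∧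
    ∑' k : ℤ, ((starRingEnd ℂ) (xhat k) * xhat (k + l)
        + (starRingEnd ℂ) (yhat k) * yhat (k + l)) = 0 := by
  haveI : Fact (0 < T) := ⟨hT⟩
  set p : ℝ → ℂ := fun t => dp * Complex.exp (Complex.I * (φp t : ℂ)) with hpdef
  set r : ℝ → ℂ := fun t => dr * Complex.exp (Complex.I * (φr t : ℂ)) with hrdef
  have hpper : Function.Periodic p T := fun t => by simp [hpdef, hφpT t]
  have hrper : Function.Periodic r T := fun t => by simp [hrdef, hφrT t]
  have hpc : Continuous p :=
    continuous_const.mul (Complex.continuous_exp.comp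
      (continuous_const.mul (Complex.continuous_ofReal.comp hφp)))
  have hrc : Continuous r :=
    continuous_const.mul (Complex.continuous_exp.comp
      (continuous_const.mul (Complex.continuous_ofReal.comp hφr)))
  set P : C(AddCircle T, ℂ) := ⟨hpper.lift, hpc.quotient_liftOn' _⟩ with hPdef
  set R : C(AddCircle T, ℂ) := ⟨hrper.lift, hrc.quotient_liftOn' _⟩ with hRdef
  have hPcoe : ∀ s : ℝ, P (s : AddCircle T) = p s := fun s => rfl
  have hRcoe : ∀ s : ℝ, R (s : AddCircle T) = r s := fun s => rfl
  have hnormexp : ∀ c : ℂ, ‖c‖ = 1 → ∀ φ : ℝ,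
      (starRingEnd ℂ) (c * Complex.exp (Complex.I * (φ : ℂ)))
        * (c * Complex.exp (Complex.I * (φ : ℂ))) = 1 := by
    intro c hc φ
    have h1 : ‖c * Complex.exp (Complex.I * (φ : ℂ))‖ = 1 := by
      rw [norm_mul, hc, one_mul, Complex.norm_exp]
      simp
    rw [Complex.conj_mul', h1]
    norm_num
  have hPuni : ∀ t : AddCircle T, (starRingEnd ℂ) (P t) * P t = 1 := by
    intro t
    induction t using QuotientAddGroup.induction_on with
    | H s => rw [hPcoe s]; exact hnormexp dp hdp (φp s)
  have hRuni : ∀ t : AddCircle T, (starRingEnd ℂ) (R t) * R t = 1 := by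
    intro t
    induction t using QuotientAddGroup.induction_on with
    | H s => rw [hRcoe s]; exact hnormexp dr hdr (φr s)
  -- Fourier coefficients of x and y in terms of those of P and R
  have hE : ∀ (k : ℤ) (t : ℝ), (fourier (-k) (t : AddCircle T) : ℂ)
      = Complex.exp (-2 * (Real.pi : ℂ) * Complex.I * (k : ℂ) * (t : ℂ) / (T : ℂ)) := by
    intro k t
    rw [fourier_coe_apply]
    congr 1
    push_cast
    ring
  have hip : ∀ k : ℤ, IntervalIntegrable
      (fun t : ℝ => (fourier (-k) (t : AddCircle T) : ℂ) • p t) volume 0 T := by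
    intro k
    exact (((fourier (-k)).continuous.comp (AddCircle.continuous_mk' T)).smul hpc).intervalIntegrable _ _
  have hir : ∀ k : ℤ, IntervalIntegrable
      (fun t : ℝ => (fourier (-k) (t : AddCircle T) : ℂ) • r t) volume 0 T := by
    intro k
    exact (((fourier (-k)).continuous.comp (AddCircle.continuous_mk' T)).smul hrc).intervalIntegrable _ _
  have hTc : ((1 / T : ℝ) : ℂ) = 1 / (T : ℂ) := by push_cast; ring
  have hxPR : ∀ k : ℤ, xhat k = fourierCoeff (⇑P) k + fourierCoeff (⇑R) k := by
    intro k
    rw [hxhat k, fourierCoeff_eq_intervalIntegral (⇑P) k 0,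
      fourierCoeff_eq_intervalIntegral (⇑R) k 0, zero_add]
    have h1 : (∫ t in (0:ℝ)..T, x t
          * Complex.exp (-2 * (Real.pi : ℂ) * Complex.I * (k : ℂ) * (t : ℂ) / (T : ℂ)))
        = (∫ t in (0:ℝ)..T, (fourier (-k) (t : AddCircle T) : ℂ) • p t)
          + ∫ t in (0:ℝ)..T, (fourier (-k) (t : AddCircle T) : ℂ) • r t := by
      rw [← intervalIntegral.integral_add (hip k) (hir k)]
      apply intervalIntegral.integral_congr
      intro t ht
      show x t * _ = (fourier (-k) (t : AddCircle T) : ℂ) • p t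
        + (fourier (-k) (t : AddCircle T) : ℂ) • r t
      simp only [smul_eq_mul, hx t, hE k t]
      ring
    have h2 : ∀ s : ℝ, (fourier (-k) (s : AddCircle T) : ℂ) • P (s : AddCircle T)
        = (fourier (-k) (s : AddCircle T) : ℂ) • p s := fun s => by rw [hPcoe s]
    have h3 : ∀ s : ℝ, (fourier (-k) (s : AddCircle T) : ℂ) • R (s : AddCircle T)
        = (fourier (-k) (s : AddCircle T) : ℂ) • r s := fun s => by rw [hRcoe s]
    simp only [h2, h3]
    rw [h1]
    rw [Complex.real_smul, Complex.real_smul, hTc]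
    ring
  have hyPR : ∀ k : ℤ, yhat k = fourierCoeff (⇑P) k - fourierCoeff (⇑R) k := by
    intro k
    rw [hyhat k, fourierCoeff_eq_intervalIntegral (⇑P) k 0,
      fourierCoeff_eq_intervalIntegral (⇑R) k 0, zero_add]
    have h1 : (∫ t in (0:ℝ)..T, y t
          * Complex.exp (-2 * (Real.pi : ℂ) * Complex.I * (k : ℂ) * (t : ℂ) / (T : ℂ)))
        = (∫ t in (0:ℝ)..T, (fourier (-k) (t : AddCircle T) : ℂ) • p t)
          - ∫ t in (0:ℝ)..T, (fourier (-k) (t : AddCircle T) : ℂ) • r t := by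
      rw [← intervalIntegral.integral_sub (hip k) (hir k)]
      apply intervalIntegral.integral_congr
      intro t ht
      show y t * _ = (fourier (-k) (t : AddCircle T) : ℂ) • p t
        - (fourier (-k) (t : AddCircle T) : ℂ) • r t
      simp only [smul_eq_mul, hy t, hE k t]
      ring
    have h2 : ∀ s : ℝ, (fourier (-k) (s : AddCircle T) : ℂ) • P (s : AddCircle T)
        = (fourier (-k) (s : AddCircle T) : ℂ) • p s := fun s => by rw [hPcoe s]
    have h3 : ∀ s : ℝ, (fourier (-k) (s : AddCircle T) : ℂ) • R (s : AddCircle T)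
        = (fourier (-k) (s : AddCircle T) : ℂ) • r s := fun s => by rw [hRcoe s]
    simp only [h2, h3]
    rw [h1]
    rw [Complex.real_smul, Complex.real_smul, hTc]
    ring
  set aP : ℤ → ℂ := fun k => fourierCoeff (⇑P) k with haP
  set aR : ℤ → ℂ := fun k => fourierCoeff (⇑R) k with haR
  have hterm : ∀ k : ℤ, (starRingEnd ℂ) (xhat k) * xhat (k + l)
      + (starRingEnd ℂ) (yhat k) * yhat (k + l)
      = 2 * ((starRingEnd ℂ) (aP k) * aP (k + l))
        + 2 * ((starRingEnd ℂ) (aR k) * aR (k + l)) := by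
    intro k
    rw [hxPR k, hxPR (k + l), hyPR k, hyPR (k + l), map_add, map_sub]
    ring
  obtain ⟨hsP, htP⟩ := golay_key P hPuni l hl
  obtain ⟨hsR, htR⟩ := golay_key R hRuni l hl
  have hsP' : Summable (fun k : ℤ => 2 * ((starRingEnd ℂ) (aP k) * aP (k + l))) := by
    apply Summable.mul_left
    apply Summable.of_norm
    have : ∀ k : ℤ, ‖(starRingEnd ℂ) (aP k) * aP (k + l)‖ = ‖aP k‖ * ‖aP (k + l)‖ := by
      intro k; rw [norm_mul, RCLike.norm_conj]
    simpa only [this] using hsP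
  have hsR' : Summable (fun k : ℤ => 2 * ((starRingEnd ℂ) (aR k) * aR (k + l))) := by
    apply Summable.mul_left
    apply Summable.of_norm
    have : ∀ k : ℤ, ‖(starRingEnd ℂ) (aR k) * aR (k + l)‖ = ‖aR k‖ * ‖aR (k + l)‖ := by
      intro k; rw [norm_mul, RCLike.norm_conj]
    simpa only [this] using hsR
  constructor
  · refine Summable.of_nonneg_of_le (fun k => norm_nonneg _) (fun k => ?_)
      ((hsP.mul_left 2).add (hsR.mul_left 2))
    rw [hterm k]
    calc ‖2 * ((starRingEnd ℂ) (aP k) * aP (k + l))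
            + 2 * ((starRingEnd ℂ) (aR k) * aR (k + l))‖
          ≤ ‖2 * ((starRingEnd ℂ) (aP k) * aP (k + l))‖
            + ‖2 * ((starRingEnd ℂ) (aR k) * aR (k + l))‖ := norm_add_le _ _
        _ = 2 * (‖aP k‖ * ‖aP (k + l)‖) + 2 * (‖aR k‖ * ‖aR (k + l)‖) := by
            simp [norm_mul, RCLike.norm_conj]
  · calc ∑' k : ℤ, ((starRingEnd ℂ) (xhat k) * xhat (k + l)
          + (starRingEnd ℂ) (yhat k) * yhat (k + l))
        = ∑' k : ℤ, (2 * ((starRingEnd ℂ) (aP k) * aP (k + l))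
          + 2 * ((starRingEnd ℂ) (aR k) * aR (k + l))) := tsum_congr hterm
      _ = (∑' k : ℤ, 2 * ((starRingEnd ℂ) (aP k) * aP (k + l)))
          + ∑' k : ℤ, 2 * ((starRingEnd ℂ) (aR k) * aR (k + l)) := Summable.tsum_add hsP' hsR'
      _ = 2 * (∑' k : ℤ, (starRingEnd ℂ) (aP k) * aP (k + l))
          + 2 * ∑' k : ℤ, (starRingEnd ℂ) (aR k) * aR (k + l) := by
            rw [tsum_mul_left, tsum_mul_left]
      _ = 0 := by rw [htP, htR]; ring
end

section
/- Let L ≥ 2, Δ ≥ 0, and M ≥ 0 be integers, and let C_{L,Δ}(M) denote the number of strictly increasing tuples (i_0,…,i_{L−1}) with 0 ≤ i_0 < i_1 < ⋯ < i_{L−1} ≤ M−1 such that the circular separations s_q = i_q − i_{q−1} − 1 for 1 ≤ q ≤ L−1 and s_L = M − 1 − i_{L−1} + i_0 all satisfy s_q ≥ Δ. Then: if M ≥ L·(Δ+1), one has L·C_{L,Δ}(M) = M·C(M − L·Δ − 1, L − 1) (i.e., C_{L,Δ}(M) = (M/L)·C(M−LΔ−1, L−1)); and if M < L·(Δ+1),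 then C_{L,Δ}(M) = 0. -/
/-- `Ccount M L Δ` is the number of strictly increasing tuples
`0 ≤ i_0 < i_1 < ⋯ < i_{L−1} ≤ M−1` whose adjacent separations
`s_q = i_q − i_{q−1} − 1` (for `1 ≤ q ≤ L−1`) and wrap-around separation
`s_L = M − 1 − i_{L−1} + i_0` are all at least `Δ`. -/
noncomputable def Ccount (M L Δ : ℕ) : ℕ :=
  Nat.card {i : Fin L → ℕ //
    StrictMono i ∧ (∀ q, i q < M) ∧
    (∀ q r : Fin L, (r : ℕ) = (q : ℕ) + 1 → i q + Δ + 1 ≤ i r) ∧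
    (∀ q0 qL : Fin L, (q0 : ℕ) = 0 → (qL : ℕ) = L - 1 → i qL + Δ + 1 ≤ M + i q0)}

noncomputable def GapSet (k Δ N : ℕ) : Finset (Fin k → ℕ) :=
  (Finset.piAntidiag Finset.univ N).filter fun s => ∀ q, Δ ≤ s q

lemma mem_GapSet {k Δ N : ℕ} {s : Fin k → ℕ} :
    s ∈ GapSet k Δ N ↔ (∑ q, s q = N ∧ ∀ q, Δ ≤ s q) := by
  simp [GapSet, Finset.mem_piAntidiag]

lemma card_piAntidiag_univ (k N : ℕ) (hk : 1 ≤ k) :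
    (Finset.piAntidiag (Finset.univ : Finset (Fin k)) N).card
      = (N + k - 1).choose (k - 1) := by
  rw [← Finset.map_sym_eq_piAntidiag, Finset.card_map, Finset.sym_univ,
    Finset.card_univ, Sym.card_sym_eq_choose]
  rw [Fintype.card_fin]
  have h1 : k - 1 ≤ N + k - 1 := by omega
  have := Nat.choose_symm h1
  have h2 : N + k - 1 - (k - 1) = N := by omega
  rw [h2] at this
  rw [← this]
  congr 1
  omega

lemma card_GapSet (k Δ N : ℕ) (hk : 1 ≤ k) :
    (GapSet k Δ (N + k * Δ)).card = (N + k - 1).choose (k - 1) := by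
  rw [← card_piAntidiag_univ k N hk]
  apply Finset.card_nbij' (fun s q => s q - Δ) (fun s q => s q + Δ)
  · intro s hs
    rw [Finset.mem_coe, mem_GapSet] at hs
    obtain ⟨h1, h2⟩ := hs
    simp only [Finset.mem_coe, Finset.mem_piAntidiag]
    refine ⟨?_, fun i _ => Finset.mem_univ i⟩
    have : ∑ q, (s q - Δ) + ∑ q : Fin k, Δ = ∑ q, s q := by
      rw [← Finset.sum_add_distrib]
      exact Finset.sum_congr rfl fun q _ => by have := h2 q; omega
    simp only [Finset.sum_const, Finset.card_univ, Fintype.card_fin, smul_eq_mul] at this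
    omega
  · intro s hs
    simp only [Finset.mem_coe, Finset.mem_piAntidiag] at hs
    rw [Finset.mem_coe, mem_GapSet]
    constructor
    · rw [Finset.sum_add_distrib, hs.1]
      simp [Finset.card_univ, mul_comm]
    · intro q; show Δ ≤ s q + Δ; omega
  · intro s hs
    rw [Finset.mem_coe, mem_GapSet] at hs
    funext q
    have := hs.2 q
    show s q - Δ + Δ = s q
    omega
  · intro s _
    funext q
    show s q + Δ - Δ = s q
    omega

lemma sum_GapSet_swap (k Δ N : ℕ) (q r : Fin k) :
    ∑ s ∈ GapSet k Δ N, (s q + 1) = ∑ s ∈ GapSet k Δ N, (s r + 1) := by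
  apply Finset.sum_nbij' (fun s => s ∘ Equiv.swap q r) (fun s => s ∘ Equiv.swap q r)
  · intro s hs
    rw [mem_GapSet] at hs ⊢
    exact ⟨by rw [← hs.1]; exact Equiv.sum_comp (Equiv.swap q r) s, fun j => hs.2 _⟩
  · intro s hs
    rw [mem_GapSet] at hs ⊢
    exact ⟨by rw [← hs.1]; exact Equiv.sum_comp (Equiv.swap q r) s, fun j => hs.2 _⟩
  · intro s _
    funext j
    simp [Function.comp, Equiv.swap_apply_self]
  · intro s _
    funext j
    simp [Function.comp, Equiv.swap_apply_self]
  · intro s _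
    simp [Function.comp, Equiv.swap_apply_left]

/-- extension of a tuple to ℕ by zero -/
def sE {l : ℕ} (s : Fin (l+1) → ℕ) : ℕ → ℕ := fun j => if h : j < l+1 then s ⟨j, h⟩ else 0

lemma sE_apply {l : ℕ} (s : Fin (l+1) → ℕ) (q : Fin (l+1)) : sE s (q : ℕ) = s q := by
  simp [sE, q.isLt, Fin.eta]

lemma sum_sE {l : ℕ} (s : Fin (l+1) → ℕ) :
    ∑ j ∈ Finset.range (l+1), sE s j = ∑ q, s q := by
  rw [← Fin.sum_univ_eq_sum_range]
  exact Finset.sum_congr rfl fun q _ => sE_apply s q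

/-- tuple reconstructed from gaps `s` and starting point `a` -/
def Ifun {l : ℕ} (s : Fin (l+1) → ℕ) (a : ℕ) : Fin (l+1) → ℕ :=
  fun q => a + ∑ j ∈ Finset.range (q : ℕ), (sE s j + 1)

lemma Ifun_zero {l : ℕ} (s : Fin (l+1) → ℕ) (a : ℕ) : Ifun s a 0 = a := by
  simp [Ifun]

/-- gaps extracted from a tuple -/
def Gp (M : ℕ) {l : ℕ} (i : Fin (l+1) → ℕ) : Fin (l+1) → ℕ :=
  fun q => if h : (q : ℕ) < l then i ⟨(q:ℕ)+1, by omega⟩ - (i q + 1)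
           else M + i 0 - (i (Fin.last l) + 1)


lemma sE_Gp {l M : ℕ} (i : Fin (l+1) → ℕ) (n : ℕ) (hn : n < l) :
    sE (Gp M i) n = i ⟨n+1, by omega⟩ - (i ⟨n, by omega⟩ + 1) := by
  have e1 : sE (Gp M i) n = Gp M i ⟨n, by omega⟩ := dif_pos (show n < l + 1 by omega)
  have e2 : Gp M i ⟨n, by omega⟩ = i ⟨n+1, by omega⟩ - (i ⟨n, by omega⟩ + 1) :=
    dif_pos (show n < l by omega)
  rw [e1, e2]

lemma sE_Gp_last {l M : ℕ} (i : Fin (l+1) → ℕ) :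
    sE (Gp M i) l = M + i 0 - (i (Fin.last l) + 1) := by
  have e1 : sE (Gp M i) l = Gp M i ⟨l, by omega⟩ := dif_pos (show l < l + 1 by omega)
  have e2 : Gp M i ⟨l, by omega⟩ = M + i 0 - (i (Fin.last l) + 1) :=
    dif_neg (show ¬ l < l by omega)
  rw [e1, e2]

lemma Gp_eq_sE {l M : ℕ} (i : Fin (l+1) → ℕ) (q : Fin (l+1)) :
    Gp M i q = sE (Gp M i) (q : ℕ) := (sE_apply _ q).symm

lemma Ifun_succ {l : ℕ} (s : Fin (l+1) → ℕ) (a : ℕ) (n : ℕ) (hn : n + 1 < l + 1) :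
    Ifun s a ⟨n+1, hn⟩ = Ifun s a ⟨n, by omega⟩ + (sE s n + 1) := by
  simp only [Ifun]
  rw [Finset.sum_range_succ]
  ring

lemma telescope {l : ℕ} (M : ℕ) (i : Fin (l+1) → ℕ)
    (h : ∀ q r : Fin (l+1), (r : ℕ) = (q : ℕ) + 1 → i q + 1 ≤ i r) :
    ∀ kk, (hk : kk ≤ l) → i ⟨kk, by omega⟩ = Ifun (Gp M i) (i 0) ⟨kk, by omega⟩ := by
  intro kk
  induction kk with
  | zero => intro _; rw [show (⟨0, by omega⟩ : Fin (l+1)) = 0 from rfl, Ifun_zero]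
  | succ n ih =>
    intro hk
    have hn := ih (by omega)
    have hstep : i ⟨n, by omega⟩ + 1 ≤ i ⟨n+1, by omega⟩ :=
      h ⟨n, by omega⟩ ⟨n+1, by omega⟩ rfl
    rw [Ifun_succ _ _ _ (by omega), ← hn, sE_Gp i n (by omega)]
    omega

section
variable {l Δ M : ℕ}

lemma sum_range_add_one (f : ℕ → ℕ) (n : ℕ) :
    ∑ j ∈ Finset.range n, (f j + 1) = (∑ j ∈ Finset.range n, f j) + n := by
  rw [Finset.sum_add_distrib, Finset.sum_const, Finset.card_range, smul_eq_mul, mul_one]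

lemma Ifun_last_eq (hM : l + 1 ≤ M) (s : Fin (l+1) → ℕ) (a : ℕ)
    (hsum : ∑ q, s q = M - (l+1)) :
    Ifun s a (Fin.last l) + (sE s l + 1) = a + M := by
  have h1 : ∑ j ∈ Finset.range (l+1), sE s j = M - (l+1) := by rw [sum_sE, hsum]
  have h2 : Ifun s a (Fin.last l) = a + ∑ j ∈ Finset.range l, (sE s j + 1) := rfl
  rw [Finset.sum_range_succ] at h1
  rw [sum_range_add_one] at h2
  omega

lemma Ifun_strictMono (s : Fin (l+1) → ℕ) (a : ℕ) : StrictMono (Ifun s a) := by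
  intro q r hqr
  apply Nat.add_lt_add_left
  apply Finset.sum_lt_sum_of_subset (Finset.range_subset_range.mpr (le_of_lt hqr))
  · exact Finset.mem_range.mpr hqr
  · exact fun h => absurd (Finset.mem_range.mp h) (lt_irrefl _)
  · exact Nat.succ_pos _
  · exact fun j _ _ => Nat.zero_le _

lemma bwd_prop (hM : l + 1 ≤ M) (s : Fin (l+1) → ℕ) (a : ℕ)
    (hmem : s ∈ GapSet (l+1) Δ (M - (l+1))) (ha : a ≤ s (Fin.last l)) :
    StrictMono (Ifun s a) ∧ (∀ q, Ifun s a q < M) ∧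
    (∀ q r : Fin (l+1), (r : ℕ) = (q : ℕ) + 1 → Ifun s a q + Δ + 1 ≤ Ifun s a r) ∧
    (∀ q0 qL : Fin (l+1), (q0 : ℕ) = 0 → (qL : ℕ) = (l+1) - 1 →
      Ifun s a qL + Δ + 1 ≤ M + Ifun s a q0) := by
  obtain ⟨hsum, hΔ⟩ := mem_GapSet.mp hmem
  have hsl : sE s l = s (Fin.last l) := sE_apply s (Fin.last l)
  have hlast := Ifun_last_eq hM s a hsum
  have hΔl : Δ ≤ s (Fin.last l) := hΔ _
  have hmono := Ifun_strictMono s a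
  have hltM : ∀ q, Ifun s a q < M := by
    intro q
    have h1 : Ifun s a q ≤ Ifun s a (Fin.last l) := hmono.monotone (Fin.le_last q)
    omega
  refine ⟨hmono, hltM, ?_, ?_⟩
  · intro q r hr
    have hq : (q : ℕ) + 1 < l + 1 := hr ▸ r.isLt
    have hre : r = ⟨(q : ℕ) + 1, hq⟩ := Fin.ext hr
    have h1 := Ifun_succ s a (q : ℕ) hq
    have heq : (⟨(q : ℕ), by omega⟩ : Fin (l+1)) = q := Fin.ext rfl
    rw [heq] at h1
    have h2 : sE s (q : ℕ) = s q := sE_apply s q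
    have h3 : Δ ≤ s q := hΔ q
    rw [hre, h1]
    omega
  · intro q0 qL h0 hL
    have hq0 : q0 = 0 := Fin.ext (by simpa using h0)
    have hqL : qL = Fin.last l := Fin.ext (by simp [hL])
    rw [hq0, hqL, Ifun_zero]
    omega

lemma fwd_facts (i : Fin (l+1) → ℕ)
    (hmono : StrictMono i) (hlt : ∀ q, i q < M)
    (hadj : ∀ q r : Fin (l+1), (r : ℕ) = (q : ℕ) + 1 → i q + Δ + 1 ≤ i r)
    (hwrap : ∀ q0 qL : Fin (l+1), (q0 : ℕ) = 0 → (qL : ℕ) = (l+1) - 1 →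
      i qL + Δ + 1 ≤ M + i q0) :
    Gp M i ∈ GapSet (l+1) Δ (M - (l+1)) ∧ i 0 ≤ Gp M i (Fin.last l) := by
  have h1 : ∀ q r : Fin (l+1), (r : ℕ) = (q : ℕ) + 1 → i q + 1 ≤ i r := by
    intro q r h; have := hadj q r h; omega
  have htel := telescope M i h1
  have hwrap' : i (Fin.last l) + Δ + 1 ≤ M + i 0 := hwrap 0 (Fin.last l) rfl rfl
  have hlastlt : i (Fin.last l) < M := hlt _
  have h0last : i 0 ≤ i (Fin.last l) := hmono.monotone (Fin.zero_le _)
  have hA : i (Fin.last l) = i 0 + ∑ j ∈ Finset.range l, (sE (Gp M i) j + 1) :=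
    htel l le_rfl
  rw [sum_range_add_one] at hA
  have hgl : sE (Gp M i) l = M + i 0 - (i (Fin.last l) + 1) := sE_Gp_last i
  constructor
  · rw [mem_GapSet]
    constructor
    · rw [← sum_sE (Gp M i), Finset.sum_range_succ]
      omega
    · intro q
      rw [Gp_eq_sE]
      by_cases hq : (q : ℕ) < l
      · rw [sE_Gp i (q : ℕ) hq]
        have h2 := hadj ⟨(q : ℕ), by omega⟩ ⟨(q : ℕ) + 1, by omega⟩ rfl
        omega
      · have hql : (q : ℕ) = l := by omega
        rw [hql, hgl]
        omega
  · rw [Gp_eq_sE, Fin.val_last, hgl]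
    omega

lemma left_inv_eq (i : Fin (l+1) → ℕ)
    (hadj : ∀ q r : Fin (l+1), (r : ℕ) = (q : ℕ) + 1 → i q + Δ + 1 ≤ i r) :
    Ifun (Gp M i) (i 0) = i := by
  have h1 : ∀ q r : Fin (l+1), (r : ℕ) = (q : ℕ) + 1 → i q + 1 ≤ i r := by
    intro q r h; have := hadj q r h; omega
  have htel := telescope M i h1
  funext q
  have h := htel (q : ℕ) (by omega)
  have e : (⟨(q : ℕ), by omega⟩ : Fin (l+1)) = q := Fin.ext rfl
  rw [e] at h
  exact h.symm

lemma right_inv_eq (hM : l + 1 ≤ M) (s : Fin (l+1) → ℕ) (a : ℕ)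
    (hmem : s ∈ GapSet (l+1) Δ (M - (l+1))) (ha : a ≤ s (Fin.last l)) :
    Gp M (Ifun s a) = s := by
  obtain ⟨hsum, hΔ⟩ := mem_GapSet.mp hmem
  have hsl : sE s l = s (Fin.last l) := sE_apply s (Fin.last l)
  have hlast := Ifun_last_eq hM s a hsum
  have hslsum : s (Fin.last l) ≤ M - (l+1) := by
    rw [← hsum]
    exact Finset.single_le_sum (fun q _ => Nat.zero_le (s q)) (Finset.mem_univ _)
  funext q
  rw [Gp_eq_sE]
  by_cases hq : (q : ℕ) < l
  · rw [sE_Gp (Ifun s a) (q : ℕ) hq]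
    have h1 := Ifun_succ s a (q : ℕ) (by omega)
    have h2 : sE s (q : ℕ) = s q := sE_apply s q
    rw [h1, h2]
    omega
  · have hql : q = Fin.last l := Fin.ext (by simp; omega)
    rw [hql, Fin.val_last, sE_Gp_last, Ifun_zero]
    omega

end

lemma ccount_eq_sum {l Δ M : ℕ} (hM : l + 1 ≤ M) :
    Ccount M (l+1) Δ = ∑ s ∈ GapSet (l+1) Δ (M - (l+1)), (s (Fin.last l) + 1) := by
  classical
  set G := GapSet (l+1) Δ (M - (l+1)) with hG
  let T := {i : Fin (l+1) → ℕ //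
    StrictMono i ∧ (∀ q, i q < M) ∧
    (∀ q r : Fin (l+1), (r : ℕ) = (q : ℕ) + 1 → i q + Δ + 1 ≤ i r) ∧
    (∀ q0 qL : Fin (l+1), (q0 : ℕ) = 0 → (qL : ℕ) = (l+1) - 1 →
      i qL + Δ + 1 ≤ M + i q0)}
  let U := {p : (Fin (l+1) → ℕ) × ℕ // p.1 ∈ G ∧ p.2 ≤ p.1 (Fin.last l)}
  have e1 : T ≃ U :=
    { toFun := fun t =>
        ⟨(Gp M t.1, t.1 0), fwd_facts t.1 t.2.1 t.2.2.1 t.2.2.2.1 t.2.2.2.2⟩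
      invFun := fun p =>
        ⟨Ifun p.1.1 p.1.2, bwd_prop hM p.1.1 p.1.2 p.2.1 p.2.2⟩
      left_inv := fun t => Subtype.ext (left_inv_eq t.1 t.2.2.2.1)
      right_inv := fun p => Subtype.ext (Prod.ext
        (right_inv_eq hM p.1.1 p.1.2 p.2.1 p.2.2) (Ifun_zero p.1.1 p.1.2)) }
  have e2 : U ≃ Σ s : {x // x ∈ G}, Fin (s.1 (Fin.last l) + 1) :=
    { toFun := fun p => ⟨⟨p.1.1, p.2.1⟩, ⟨p.1.2, Nat.lt_succ_of_le p.2.2⟩⟩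
      invFun := fun x => ⟨(x.1.1, x.2.1), x.1.2, Nat.lt_succ_iff.mp x.2.2⟩
      left_inv := fun p => rfl
      right_inv := fun x => rfl }
  have : Ccount M (l+1) Δ = Nat.card T := rfl
  rw [this, Nat.card_congr (e1.trans e2), Nat.card_eq_fintype_card,
    Fintype.card_sigma]
  simp only [Fintype.card_fin]
  exact Finset.sum_coe_sort G (fun s => s (Fin.last l) + 1)

lemma chain_lb {l Δ : ℕ} (i : Fin (l+1) → ℕ)
    (hadj : ∀ q r : Fin (l+1), (r : ℕ) = (q : ℕ) + 1 → i q + Δ + 1 ≤ i r) :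
    ∀ kk, (hk : kk ≤ l) → i 0 + kk * (Δ + 1) ≤ i ⟨kk, by omega⟩ := by
  intro kk
  induction kk with
  | zero => intro _; simp [show (⟨0, by omega⟩ : Fin (l+1)) = 0 from rfl]
  | succ n ih =>
    intro hk
    have h1 := ih (by omega)
    have h2 := hadj ⟨n, by omega⟩ ⟨n+1, by omega⟩ rfl
    have h3 : (n + 1) * (Δ + 1) = n * (Δ + 1) + (Δ + 1) := by ring
    rw [h3]
    omega


/-- Theorem 2 of the paper. For `L ≥ 2`:
if `M ≥ L(Δ+1)` then `C_{L,Δ}(M) = (M/L)·C(M − LΔ − 1, L − 1)`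
(stated multiplicatively as `L·C_{L,Δ}(M) = M·C(M − LΔ − 1, L − 1)`),
and if `M < L(Δ+1)` then `C_{L,Δ}(M) = 0`. -/
theorem stmt_9 (M L Δ : ℕ) (hL : 2 ≤ L) :
    (L * (Δ + 1) ≤ M →
      L * Ccount M L Δ = M * (M - L * Δ - 1).choose (L - 1)) ∧
    (M < L * (Δ + 1) → Ccount M L Δ = 0) := by
  obtain ⟨l, rfl⟩ : ∃ l, L = l + 1 := ⟨L - 1, by omega⟩
  constructor
  · intro hM
    have hM' : l + 1 ≤ M := le_trans (by nlinarith) hM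
    have hMΔ : (l + 1) + (l + 1) * Δ ≤ M := by nlinarith
    rw [ccount_eq_sum hM']
    set G := GapSet (l+1) Δ (M - (l+1)) with hG
    have hN : M - (l+1) = (M - (l+1) - (l+1) * Δ) + (l+1) * Δ := by omega
    have hcard : G.card = (M - (l+1) * Δ - 1).choose l := by
      rw [hG, hN, card_GapSet (l+1) Δ _ (by omega)]
      congr 1 <;> omega
    have hsym : ∀ q : Fin (l+1),
        ∑ s ∈ G, (s q + 1) = ∑ s ∈ G, (s (Fin.last l) + 1) :=
      fun q => sum_GapSet_swap (l+1) Δ (M - (l+1)) q (Fin.last l)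
    have hrow : ∀ s ∈ G, ∑ q : Fin (l+1), (s q + 1) = M := by
      intro s hs
      obtain ⟨hsum, -⟩ := mem_GapSet.mp hs
      rw [Finset.sum_add_distrib, hsum, Finset.sum_const, Finset.card_univ,
        Fintype.card_fin, smul_eq_mul, mul_one]
      omega
    have htotal : (l + 1) * ∑ s ∈ G, (s (Fin.last l) + 1) = M * G.card := by
      calc (l + 1) * ∑ s ∈ G, (s (Fin.last l) + 1)
          = ∑ _q : Fin (l+1), ∑ s ∈ G, (s (Fin.last l) + 1) := by
            rw [Finset.sum_const, Finset.card_univ, Fintype.card_fin, smul_eq_mul]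
        _ = ∑ q : Fin (l+1), ∑ s ∈ G, (s q + 1) :=
            (Finset.sum_congr rfl fun q _ => (hsym q).symm)
        _ = ∑ s ∈ G, ∑ q : Fin (l+1), (s q + 1) := Finset.sum_comm
        _ = ∑ _s ∈ G, M := Finset.sum_congr rfl hrow
        _ = G.card * M := by rw [Finset.sum_const, smul_eq_mul]
        _ = M * G.card := Nat.mul_comm _ _
    rw [htotal, hcard]
    simp only [Nat.add_sub_cancel]
  · intro hM
    have : IsEmpty {i : Fin (l+1) → ℕ //
      StrictMono i ∧ (∀ q, i q < M) ∧
      (∀ q r : Fin (l+1), (r : ℕ) = (q : ℕ) + 1 → i q + Δ + 1 ≤ i r) ∧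
      (∀ q0 qL : Fin (l+1), (q0 : ℕ) = 0 → (qL : ℕ) = (l+1) - 1 →
        i qL + Δ + 1 ≤ M + i q0)} := by
      constructor
      rintro ⟨i, hmono, hlt, hadj, hwrap⟩
      have h1 := chain_lb i hadj l le_rfl
      have h2 : i (Fin.last l) + Δ + 1 ≤ M + i 0 := hwrap 0 (Fin.last l) rfl rfl
      have h3 : (⟨l, by omega⟩ : Fin (l+1)) = Fin.last l := rfl
      rw [h3] at h1
      have h4 : (l + 1) * (Δ + 1) = l * (Δ + 1) + (Δ + 1) := by ring
      rw [h4] at hM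
      omega
    exact Nat.card_of_isEmpty
end

section
/- Let k ≥ 2 be an integer, M = 2^k, and for Δ ≥ 0 let C_{2,Δ}(M) denote the number of pairs (i_0, i_1) with 0 ≤ i_0 < i_1 ≤ M−1 such that both circular separations s_1 = i_1 − i_0 − 1 and s_2 = M − 1 − i_1 + i_0 are at least Δ. Then: (a) for Δ = M/4 − 1, ⌊log₂ C_{2,Δ}(M)⌋ = ⌊log₂ (M choose 2)⌋ = 2k − 2; and (b) for every Δ ≥ M/4, ⌊log₂ C_{2,Δ}(M)⌋ < 2k − 2 (where ⌊log₂ 0⌋ is taken as 0). Hence Δ = M/4 − 1 is the largest separation for which no spectral-efficiency loss occurs with L = 2. -/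
/-- `C2count M Δ` is the number of pairs `(i_0, i_1)` with `0 ≤ i_0 < i_1 ≤ M−1` such that
both circular separations `s_1 = i_1 − i_0 − 1` and `s_2 = M − 1 − i_1 + i_0` are `≥ Δ`. -/
noncomputable def C2count (M Δ : ℕ) : ℕ :=
  Nat.card {p : ℕ × ℕ //
    p.1 < p.2 ∧ p.2 < M ∧ p.1 + Δ + 1 ≤ p.2 ∧ p.2 + Δ + 1 ≤ M + p.1}

lemma C2count_eq (M Δ : ℕ) :
    C2count M Δ = ∑ d ∈ Finset.Icc (Δ + 1) (M - (Δ + 1)), (M - d) := by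
  classical
  have h1 : C2count M Δ = ((Finset.range M ×ˢ Finset.range M).filter
      (fun p => p.1 < p.2 ∧ p.2 < M ∧ p.1 + Δ + 1 ≤ p.2 ∧ p.2 + Δ + 1 ≤ M + p.1)).card := by
    rw [C2count]
    rw [show {p : ℕ × ℕ // p.1 < p.2 ∧ p.2 < M ∧ p.1 + Δ + 1 ≤ p.2 ∧ p.2 + Δ + 1 ≤ M + p.1}
        = ↥{p : ℕ × ℕ | p.1 < p.2 ∧ p.2 < M ∧ p.1 + Δ + 1 ≤ p.2 ∧ p.2 + Δ + 1 ≤ M + p.1} from rfl]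
    rw [Nat.card_coe_set_eq, ← Set.ncard_coe_finset]
    congr 1
    ext p
    simp only [Set.mem_setOf_eq, Finset.coe_filter, Finset.mem_product, Finset.mem_range]
    constructor
    · rintro ⟨h1, h2, h3, h4⟩; exact ⟨⟨by omega, h2⟩, h1, h2, h3, h4⟩
    · rintro ⟨_, h⟩; exact h
  have h2 : ((Finset.Icc (Δ + 1) (M - (Δ + 1))).sigma (fun d => Finset.range (M - d))).card
      = ((Finset.range M ×ˢ Finset.range M).filter
      (fun p => p.1 < p.2 ∧ p.2 < M ∧ p.1 + Δ + 1 ≤ p.2 ∧ p.2 + Δ + 1 ≤ M + p.1)).card := by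
    refine Finset.card_bij' (fun x _ => (x.2, x.2 + x.1)) (fun p _ => ⟨p.2 - p.1, p.1⟩)
      ?hi ?hj ?li ?ri
    case hi =>
      rintro ⟨d, i⟩ ha
      simp only [Finset.mem_sigma, Finset.mem_Icc, Finset.mem_range] at ha
      simp only [Finset.mem_filter, Finset.mem_product, Finset.mem_range]
      omega
    case hj =>
      rintro ⟨i, j⟩ hb
      simp only [Finset.mem_filter, Finset.mem_product, Finset.mem_range] at hb
      simp only [Finset.mem_sigma, Finset.mem_Icc, Finset.mem_range]
      omega
    case li =>
      rintro ⟨d, i⟩ ha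
      simp only [Nat.add_sub_cancel_left, Nat.add_sub_cancel]
    case ri =>
      rintro ⟨i, j⟩ hb
      simp only [Finset.mem_filter, Finset.mem_product, Finset.mem_range] at hb
      simp only [Prod.mk.injEq]
      exact ⟨trivial, by omega⟩
  rw [h1, ← h2, Finset.card_sigma]
  simp [Finset.card_range]

lemma sum_aux (a b M : ℕ) (hb : b ≤ M) :
    (∑ d ∈ Finset.Icc a b, (M - d)) * 2 + (a + b) * (b + 1 - a) = 2 * M * (b + 1 - a) := by
  rcases le_or_gt a (b + 1) with h | h
  · have hsum : (∑ d ∈ Finset.Icc a b, (M - d)) + (∑ d ∈ Finset.Icc a b, d)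
        = (b + 1 - a) * M := by
      rw [← Finset.sum_add_distrib]
      rw [Finset.sum_congr rfl (g := fun _ => M)
        (fun d hd => by rw [Finset.mem_Icc] at hd; show M - d + d = M; omega)]
      rw [Finset.sum_const, Nat.card_Icc, smul_eq_mul]
    have hid : (∑ d ∈ Finset.Icc a b, d) * 2 = (a + b) * (b + 1 - a) := by
      rw [show Finset.Icc a b = Finset.Ico a (b + 1) from (Finset.Ico_add_one_right_eq_Icc a b).symm,
        Finset.sum_Ico_eq_sum_range]
      rw [Finset.sum_add_distrib, Finset.sum_const, Finset.card_range, smul_eq_mul]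
      rw [add_mul, Finset.sum_range_id_mul_two]
      obtain ⟨c, hc⟩ : ∃ c, b + 1 - a = c := ⟨_, rfl⟩
      rw [hc]
      rcases c with _ | c'
      · simp
      · have hb' : b = a + c' := by omega
        subst hb'
        simp only [Nat.succ_sub_one]
        ring
    calc (∑ d ∈ Finset.Icc a b, (M - d)) * 2 + (a + b) * (b + 1 - a)
        = (∑ d ∈ Finset.Icc a b, (M - d)) * 2 + (∑ d ∈ Finset.Icc a b, d) * 2 := by rw [hid]
      _ = ((∑ d ∈ Finset.Icc a b, (M - d)) + (∑ d ∈ Finset.Icc a b, d)) * 2 := by ring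
      _ = (b + 1 - a) * M * 2 := by rw [hsum]
      _ = 2 * M * (b + 1 - a) := by ring
  · have he : Finset.Icc a b = ∅ := Finset.Icc_eq_empty (by omega)
    have hz : b + 1 - a = 0 := by omega
    rw [he, hz]
    simp

/-- For `M = 2^k` with `k ≥ 2` and `L = 2` active chirps:
(a) with `Δ = M/4 − 1` one has `⌊log₂ C_{2,Δ}(M)⌋ = ⌊log₂ (M choose 2)⌋ = 2k − 2`
(no spectral-efficiency loss), and (b) for every `Δ ≥ M/4`,
`⌊log₂ C_{2,Δ}(M)⌋ < 2k − 2`; hence `Δ = M/4 − 1` is the largest no-loss separation. -/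
theorem stmt_12 (k : ℕ) (hk : 2 ≤ k) :
    (Nat.log 2 (C2count (2 ^ k) (2 ^ k / 4 - 1)) = Nat.log 2 ((2 ^ k).choose 2) ∧
      Nat.log 2 ((2 ^ k).choose 2) = 2 * k - 2) ∧
    (∀ Δ : ℕ, 2 ^ k / 4 ≤ Δ → Nat.log 2 (C2count (2 ^ k) Δ) < 2 * k - 2) := by
  obtain ⟨n, rfl⟩ : ∃ n, k = n + 2 := ⟨k - 2, by omega⟩
  obtain ⟨t, htdef⟩ : ∃ t, (2 : ℕ) ^ n = t := ⟨_, rfl⟩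
  have ht : 1 ≤ t := htdef ▸ Nat.one_le_two_pow
  have htt : t ≤ t * t := Nat.le_mul_of_pos_left t ht
  have htt1 : 1 ≤ t * t := le_trans ht htt
  have hM : (2 : ℕ) ^ (n + 2) = 4 * t := by rw [pow_add, htdef]; ring
  have hdiv : (2 : ℕ) ^ (n + 2) / 4 = t := by rw [hM]; omega
  have hp1 : (2 : ℕ) ^ (2 * (n + 2) - 2) = 4 * (t * t) := by
    have h : 2 * (n + 2) - 2 = n + (n + 2) := by omega
    rw [h, pow_add, hM, htdef]; ring
  have hp2 : (2 : ℕ) ^ (2 * (n + 2) - 2 + 1) = 8 * (t * t) := by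
    rw [pow_succ, hp1]; ring
  -- value of C2count at Δ = t - 1
  have hCa : C2count (2 ^ (n + 2)) (2 ^ (n + 2) / 4 - 1) * 2 = 8 * (t * t) + 4 * t := by
    rw [hdiv, hM, C2count_eq]
    have h1 : t - 1 + 1 = t := by omega
    rw [h1]
    have h2 : 4 * t - t = 3 * t := by omega
    rw [h2]
    have heq := sum_aux t (3 * t) (4 * t) (by omega)
    have h3 : 3 * t + 1 - t = 2 * t + 1 := by omega
    rw [h3] at heq
    linarith [heq]
  have hlogCa : Nat.log 2 (C2count (2 ^ (n + 2)) (2 ^ (n + 2) / 4 - 1)) = 2 * (n + 2) - 2 := by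
    apply Nat.log_eq_of_pow_le_of_lt_pow
    · rw [hp1]; linarith [hCa]
    · rw [hp2]; linarith [hCa, htt, htt1]
  -- value of choose
  have h41 : 4 * t - 1 + 1 = 4 * t := by omega
  have hch2 : ((4 * t).choose 2) * 2 = 4 * t * (4 * t - 1) := by
    rw [Nat.choose_two_right]
    exact Nat.div_mul_cancel (Dvd.dvd.mul_right ⟨2 * t, by ring⟩ _)
  have h5 := congrArg (HMul.hMul (4 * t)) h41
  have hch3 : ((4 * t).choose 2) * 2 + 4 * t = 16 * (t * t) := by
    have h5' : 4 * t * (4 * t - 1) + 4 * t = 16 * (t * t) := by linarith [h5]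
    linarith [hch2, h5']
  have hlogCh : Nat.log 2 ((2 ^ (n + 2)).choose 2) = 2 * (n + 2) - 2 := by
    rw [hM]
    apply Nat.log_eq_of_pow_le_of_lt_pow
    · rw [hp1]; linarith [hch3, htt]
    · rw [hp2]; linarith [hch3, ht]
  refine ⟨⟨by rw [hlogCa, hlogCh], hlogCh⟩, ?_⟩
  intro Δ hΔ
  rw [hdiv] at hΔ
  have hCb : C2count (2 ^ (n + 2)) Δ * 2 + 4 * t ≤ 8 * (t * t) := by
    rw [C2count_eq, hM]
    have hsub : Finset.Icc (Δ + 1) (4 * t - (Δ + 1)) ⊆ Finset.Icc (t + 1) (4 * t - (t + 1)) :=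
      Finset.Icc_subset_Icc (by omega) (by omega)
    have hle : (∑ d ∈ Finset.Icc (Δ + 1) (4 * t - (Δ + 1)), (4 * t - d))
        ≤ ∑ d ∈ Finset.Icc (t + 1) (4 * t - (t + 1)), (4 * t - d) :=
      Finset.sum_le_sum_of_subset hsub
    have h6 : 4 * t - (t + 1) = 3 * t - 1 := by omega
    rw [h6] at hle
    have heq := sum_aux (t + 1) (3 * t - 1) (4 * t) (by omega)
    have h7 : (t + 1) + (3 * t - 1) = 4 * t := by omega
    have h8 : (3 * t - 1) + 1 - (t + 1) = 2 * t - 1 := by omega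
    rw [h7, h8] at heq
    have h9 : 2 * t - 1 + 1 = 2 * t := by omega
    have h10 := congrArg (HMul.hMul (4 * t)) h9
    linarith [heq, hle, h10]
  rcases Nat.eq_zero_or_pos (C2count (2 ^ (n + 2)) Δ) with h0 | h0
  · rw [h0, Nat.log_zero_right]
    omega
  · apply Nat.log_lt_of_lt_pow (by omega)
    rw [hp1]
    linarith [hCb, ht]
end
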